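/- arXiv:1205.4549 — 3 statements merged into one kernel-verified Lean document; each statement's English description precedes it below -/
import Mathlib

section
/- Let a < b be real numbers, let a = x₀ < x₁ < ⋯ < xₙ = b be a partition of [a,b] with hᵢ = x_{i+1} − xᵢ, and let f : [a,b] → ℝ be differentiable on (a,b) with f' integrable on [a,b] and γ ≤ f'(x) ≤ Γ for all x ∈ [a,b]. Define S(f, Iₙ) = (1/2) ∑_{i=0}^{n−1} [f((3xᵢ + x_{i+1})/4) + f((xᵢ + 3x_{i+1})/4)] hᵢ and set Sᵢ = (f(x_{i+1}) − f(xᵢ))/hᵢ. Then |∫_a^b f(x) dx − S(f, Iₙ)| ≤ (1/4) ∑_{i=0}^{n−1} (Γ − Sᵢ) hᵢ². -/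
/-!
On a cell `[c, d]` with quarter points `p₁ = (3c + d)/4`, `p₂ = (c + 3d)/4` and midpoint `m`, the
Peano kernel of the two-point rule is `t - c` on `[c, p₁]`, `t - m` on `[p₁, p₂]` and `t - d` on
`[p₂, d]`. Integrating by parts on the three pieces expresses the local error as the integral of
the kernel against `f'`; the kernel has mean zero, so `f'` may be replaced by `f' - Γ ≤ 0`, and
`|kernel| ≤ (d - c)/4` then bounds the error by `(d - c)/4 · ∫_c^d (Γ - f') =
(d - c)²/4 · (Γ - (f d - f c)/(d - c))`. Summing over the cells gives the composite estimate.
-/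

open MeasureTheory Set intervalIntegral

theorem IntervalIntegrable.mono_Icc {E : Type*} [NormedAddCommGroup E] {f : ℝ → E}
    {μ : Measure ℝ} {a b c d : ℝ} (hf : IntervalIntegrable f μ a b) (hac : a ≤ c) (hcd : c ≤ d)
    (hdb : d ≤ b) : IntervalIntegrable f μ c d :=
  hf.mono_set (uIcc_subset_uIcc (mem_uIcc_of_le hac (hcd.trans hdb))
    (mem_uIcc_of_le (hac.trans hcd) hdb))

theorem integral_sub_mul_deriv_eq {f f' : ℝ → ℝ} {p q : ℝ} (c : ℝ) (hpq : p ≤ q)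
    (hcont : ContinuousOn f (Icc p q)) (hderiv : ∀ t ∈ Ioo p q, HasDerivAt f (f' t) t)
    (hint : IntervalIntegrable f' volume p q) :
    ∫ t in p..q, (t - c) * f' t = (q - c) * f q - (p - c) * f p - ∫ t in p..q, f t := by
  have hu : ContinuousOn (fun t : ℝ => t - c) (uIcc p q) := by fun_prop
  rw [← uIcc_of_le hpq] at hcont
  simpa using integral_mul_deriv_eq_deriv_mul_of_hasDerivAt hu hcont
    (fun t _ => (hasDerivAt_id t).sub_const c)
    (by rwa [min_eq_left hpq, max_eq_right hpq]) intervalIntegrable_const hint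

/-- `∫ t in p..q, (t - m) * (f' t - Γ)` after integration by parts. -/
noncomputable def kernelPiece (f : ℝ → ℝ) (Γ m p q : ℝ) : ℝ :=
  (q - m) * f q - (p - m) * f p - (∫ t in p..q, f t) - Γ * ((q - m) ^ 2 - (p - m) ^ 2) / 2

theorem abs_kernelPiece_le {f f' : ℝ → ℝ} {p q c M Γ : ℝ} (hpq : p ≤ q)
    (hcont : ContinuousOn f (Icc p q)) (hderiv : ∀ t ∈ Ioo p q, HasDerivAt f (f' t) t)
    (hint : IntervalIntegrable f' volume p q) (hbound : ∀ t ∈ Icc p q, f' t ≤ Γ)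
    (hM : ∀ t ∈ Icc p q, |t - c| ≤ M) :
    |kernelPiece f Γ c p q| ≤ M * (Γ * (q - p) - (f q - f p)) := by
  have hftc : ∫ t in p..q, f' t = f q - f p :=
    integral_eq_sub_of_hasDeriv_right_of_le hpq hcont
      (fun t ht => (hderiv t ht).hasDerivWithinAt) hint
  have hkernel : ∫ t in p..q, (t - c) * (f' t - Γ) = kernelPiece f Γ c p q := by
    have hlin : ∫ t in p..q, (t - c) * (f' t - Γ) =
        (∫ t in p..q, (t - c) * f' t) - Γ * ∫ t in p..q, (t - c) := by
      rw [← intervalIntegral.integral_const_mul, ← integral_sub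
        (hint.continuousOn_mul (by fun_prop)) (Continuous.intervalIntegrable (by fun_prop) _ _)]
      congr 1 with t
      ring
    rw [hlin, integral_sub_mul_deriv_eq c hpq hcont hderiv hint,
      integral_comp_sub_right (fun t => t) c, integral_id, kernelPiece]
    ring
  calc _ = |∫ t in p..q, (t - c) * (f' t - Γ)| := by rw [hkernel]
    _ ≤ ∫ t in p..q, |(t - c) * (f' t - Γ)| := abs_integral_le_integral_abs hpq
    _ ≤ ∫ t in p..q, M * (Γ - f' t) := by
      refine integral_mono_on hpq ?_ ((intervalIntegrable_const.sub hint).const_mul M) ?_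
      · exact ((hint.sub intervalIntegrable_const).continuousOn_mul (by fun_prop)).abs
      intro t ht
      rw [abs_mul, abs_of_nonpos (sub_nonpos.2 (hbound t ht)), neg_sub]
      exact mul_le_mul_of_nonneg_right (hM t ht) (sub_nonneg.2 (hbound t ht))
    _ = M * (Γ * (q - p) - (f q - f p)) := by
      rw [intervalIntegral.integral_const_mul, integral_sub intervalIntegrable_const hint, hftc,
        intervalIntegral.integral_const, smul_eq_mul]
      ring

theorem abs_integral_sub_quarterPointRule_le {f f' : ℝ → ℝ} {c d Γ : ℝ} (hcd : c < d)
    (hcont : ContinuousOn f (Icc c d)) (hderiv : ∀ t ∈ Ioo c d, HasDerivAt f (f' t) t)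
    (hint : IntervalIntegrable f' volume c d) (hbound : ∀ t ∈ Icc c d, f' t ≤ Γ) :
    |(∫ t in c..d, f t) - (1 / 2) * ((f ((3 * c + d) / 4) + f ((c + 3 * d) / 4)) * (d - c))|
      ≤ (1 / 4) * ((Γ - (f d - f c) / (d - c)) * (d - c) ^ 2) := by
  set p₁ := (3 * c + d) / 4 with hp₁
  set p₂ := (c + 3 * d) / 4 with hp₂
  have hcp₁ : c ≤ p₁ := by linarith
  have hp₁p₂ : p₁ ≤ p₂ := by linarith
  have hp₂d : p₂ ≤ d := by linarith
  have hfi : ∀ u v, c ≤ u → u ≤ v → v ≤ d → IntervalIntegrable f volume u v :=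
    fun u v hcu huv hvd => (hcont.mono (Icc_subset_Icc hcu hvd)).intervalIntegrable_of_Icc huv
  have piece : ∀ p q m, c ≤ p → p ≤ q → q ≤ d → (∀ t ∈ Icc p q, |t - m| ≤ (d - c) / 4) →
      |kernelPiece f Γ m p q| ≤ (d - c) / 4 * (Γ * (q - p) - (f q - f p)) :=
    fun p q m hcp hpq hqd hM =>
    abs_kernelPiece_le hpq (hcont.mono (Icc_subset_Icc hcp hqd))
      (fun t ht => hderiv t (Ioo_subset_Ioo hcp hqd ht))
      (hint.mono_Icc hcp hpq hqd)
      (fun t ht => hbound t (Icc_subset_Icc hcp hqd ht)) hM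
  have e₁ := piece c p₁ c le_rfl hcp₁ (hp₁p₂.trans hp₂d)
    fun t ht => abs_le.2 ⟨by linarith [ht.1], by linarith [ht.2]⟩
  have e₂ := piece p₁ p₂ ((c + d) / 2) hcp₁ hp₁p₂ hp₂d
    fun t ht => abs_le.2 ⟨by linarith [ht.1], by linarith [ht.2]⟩
  have e₃ := piece p₂ d d (hcp₁.trans hp₁p₂) hp₂d le_rfl
    fun t ht => abs_le.2 ⟨by linarith [ht.1], by linarith [ht.2]⟩
  have hsplit :
      ∫ t in c..d, f t = (∫ t in c..p₁, f t) + (∫ t in p₁..p₂, f t) + ∫ t in p₂..d, f t := by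
    rw [integral_add_adjacent_intervals (hfi _ _ le_rfl hcp₁ (hp₁p₂.trans hp₂d))
        (hfi _ _ hcp₁ hp₁p₂ hp₂d),
      integral_add_adjacent_intervals (hfi _ _ le_rfl (hcp₁.trans hp₁p₂) hp₂d)
        (hfi _ _ (hcp₁.trans hp₁p₂) hp₂d le_rfl)]
  calc _ = |kernelPiece f Γ c c p₁ + kernelPiece f Γ ((c + d) / 2) p₁ p₂
          + kernelPiece f Γ d p₂ d| := by
        rw [abs_sub_comm, hsplit]
        congr 1
        simp only [kernelPiece]
        ring
    _ ≤ _ := (abs_add_three _ _ _).trans (add_le_add (add_le_add e₁ e₂) e₃)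
    _ = _ := by
        field_simp [(sub_pos.2 hcd).ne']
        ring

theorem composite_quadrature_L1_upper_general
    (a b γ Γ : ℝ) (n : ℕ)
    (x : ℕ → ℝ) (hx0 : x 0 = a) (hxn : x n = b)
    (hmono : ∀ i < n, x i < x (i + 1))
    (f f' : ℝ → ℝ)
    (hcont : ContinuousOn f (Set.Icc a b))
    (hderiv : ∀ t ∈ Set.Ioo a b, HasDerivAt f (f' t) t)
    (hint : IntervalIntegrable f' MeasureTheory.volume a b)
    (hbound : ∀ t ∈ Set.Icc a b, γ ≤ f' t ∧ f' t ≤ Γ) :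
    |(∫ t in a..b, f t) -
        (1 / 2) * ∑ i ∈ Finset.range n,
          (f ((3 * x i + x (i + 1)) / 4) + f ((x i + 3 * x (i + 1)) / 4)) * (x (i + 1) - x i)|
      ≤ (1 / 4) * ∑ i ∈ Finset.range n,
          (Γ - (f (x (i + 1)) - f (x i)) / (x (i + 1) - x i)) * (x (i + 1) - x i) ^ 2 := by
  have hx : MonotoneOn x (Iic n) :=
    monotoneOn_of_le_add_one ordConnected_Iic fun i _ _ hi => (hmono i hi).le
  have hends : ∀ i < n, a ≤ x i ∧ x (i + 1) ≤ b := fun i hi =>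
    ⟨hx0 ▸ hx (Nat.zero_le _) hi.le (Nat.zero_le i), hxn ▸ hx hi (le_refl n) hi⟩
  have hsplit : ∫ t in a..b, f t = ∑ i ∈ Finset.range n, ∫ t in x i..x (i + 1), f t := by
    rw [sum_integral_adjacent_intervals fun i hi => (hcont.mono (Icc_subset_Icc (hends i hi).1
      (hends i hi).2)).intervalIntegrable_of_Icc (hmono i hi).le, hx0, hxn]
  rw [hsplit, Finset.mul_sum, Finset.mul_sum, ← Finset.sum_sub_distrib]
  refine (Finset.abs_sum_le_sum_abs _ _).trans (Finset.sum_le_sum fun i hi => ?_)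
  have hi : i < n := Finset.mem_range.1 hi
  obtain ⟨ha, hb⟩ := hends i hi
  have hcell : Icc (x i) (x (i + 1)) ⊆ Icc a b := Icc_subset_Icc ha hb
  exact abs_integral_sub_quarterPointRule_le (hmono i hi) (hcont.mono hcell)
    (fun t ht => hderiv t (Ioo_subset_Ioo ha hb ht))
    (hint.mono_Icc ha (hmono i hi).le hb)
    (fun t ht => (hbound t (hcell ht)).2)

/-- **Composite quadrature rule, upper-bound estimate** (Theorem 3.1, inequality (3.3)).
For a partition `a = x 0 < x 1 < ⋯ < x n = b` with `hᵢ = x (i+1) - x i`, and `f` continuous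
on `[a,b]`, differentiable on `(a,b)` with `f'` integrable and `γ ≤ f' ≤ Γ` on `[a,b]`,
the composite rule `S(f, Iₙ) = (1/2) ∑ᵢ [f((3xᵢ+x_{i+1})/4) + f((xᵢ+3x_{i+1})/4)] hᵢ`
satisfies `|∫_a^b f - S(f, Iₙ)| ≤ (1/4) ∑ᵢ (Γ - Sᵢ) hᵢ²` where
`Sᵢ = (f x_{i+1} - f xᵢ)/hᵢ`. -/
theorem composite_quadrature_L1_upper
    (a b γ Γ : ℝ) (hab : a < b) (n : ℕ) (hn : 1 ≤ n)
    (x : ℕ → ℝ) (hx0 : x 0 = a) (hxn : x n = b)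
    (hmono : ∀ i < n, x i < x (i + 1))
    (f f' : ℝ → ℝ)
    (hcont : ContinuousOn f (Set.Icc a b))
    (hderiv : ∀ t ∈ Set.Ioo a b, HasDerivAt f (f' t) t)
    (hint : IntervalIntegrable f' MeasureTheory.volume a b)
    (hbound : ∀ t ∈ Set.Icc a b, γ ≤ f' t ∧ f' t ≤ Γ) :
    |(∫ t in a..b, f t) -
        (1 / 2) * ∑ i ∈ Finset.range n,
          (f ((3 * x i + x (i + 1)) / 4) + f ((x i + 3 * x (i + 1)) / 4)) * (x (i + 1) - x i)|
      ≤ (1 / 4) * ∑ i ∈ Finset.range n,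
          (Γ - (f (x (i + 1)) - f (x i)) / (x (i + 1) - x i)) * (x (i + 1) - x i) ^ 2 :=
  composite_quadrature_L1_upper_general a b γ Γ n x hx0 hxn hmono f f' hcont hderiv hint hbound
end

section
/- Let a < b be real numbers, let n ≥ 1 be an integer, and consider the uniform partition xᵢ = a + i(b−a)/n (i = 0, 1, …, n) of [a,b] with mesh h = (b−a)/n. Let f : [a,b] → ℝ be twice continuously differentiable on (a,b) with f'' ∈ L²[a,b]. Define S(f, Iₙ) = (h/2) ∑_{i=0}^{n−1} [f((3xᵢ + x_{i+1})/4) + f((xᵢ + 3x_{i+1})/4)]. Then |∫_a^b f(x) dx − S(f, Iₙ)| ≤ ((b−a)^{5/2}/(4√3 π n²)) · ‖f''‖₂. -/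
/-!
On each cell `[u, v]` the error of the two-point rule is `∫ K f''`, where the Peano kernel `K` is
`(t - c)² / 2` with `c = u, (u + v)/2, v` on the three pieces cut out by the nodes; this follows by
integrating by parts twice. Cauchy–Schwarz bounds the cell error by `‖K‖₂ ‖f''‖₂`, with
`‖K‖₂² = (v - u)⁵ / 5120`, and a second (discrete) Cauchy–Schwarz over the cells gives the
constant `(b - a)^{5/2} / (√5120 n²)`, which is below the stated one since `48 π² < 5120`.
Integrating by parts up to the endpoints needs `f'` to extend continuously to `[a, b]`; it does,
because `f'' ∈ L² ⊆ L¹`.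
-/

open MeasureTheory Set Real

theorem abs_integral_mul_le_sqrt_mul_sqrt {α : Type*} [MeasurableSpace α] {μ : Measure α}
    {f g : α → ℝ} (hf : MemLp f 2 μ) (hg : MemLp g 2 μ) :
    |∫ t, f t * g t ∂μ| ≤ √(∫ t, f t ^ 2 ∂μ) * √(∫ t, g t ^ 2 ∂μ) := by
  have holder := integral_mul_norm_le_Lp_mul_Lq (p := 2) (q := 2) Real.HolderConjugate.two_two
    (by simpa using hf) (by simpa using hg)
  simp only [Real.norm_eq_abs, Real.rpow_two, sq_abs] at holder
  rw [Real.sqrt_eq_rpow, Real.sqrt_eq_rpow]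
  refine (abs_integral_le_integral_abs).trans ?_
  simpa only [abs_mul] using holder

theorem abs_intervalIntegral_mul_le_sqrt_mul_sqrt {x y : ℝ} (hxy : x ≤ y) {f g : ℝ → ℝ}
    (hf : IntervalIntegrable f volume x y)
    (hf2 : IntervalIntegrable (fun t => f t ^ 2) volume x y)
    (hg : IntervalIntegrable g volume x y)
    (hg2 : IntervalIntegrable (fun t => g t ^ 2) volume x y) :
    |∫ t in x..y, f t * g t| ≤ √(∫ t in x..y, f t ^ 2) * √(∫ t in x..y, g t ^ 2) := by
  simp only [intervalIntegral.integral_of_le hxy]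
  rw [intervalIntegrable_iff_integrableOn_Ioc_of_le hxy] at hf hf2 hg hg2
  exact abs_integral_mul_le_sqrt_mul_sqrt ((memLp_two_iff_integrable_sq hf.1).2 hf2)
    ((memLp_two_iff_integrable_sq hg.1).2 hg2)

theorem IntervalIntegrable.of_sq {x y : ℝ} (hxy : x ≤ y) {f : ℝ → ℝ}
    (hf : AEStronglyMeasurable f (volume.restrict (Ioc x y)))
    (hf2 : IntervalIntegrable (fun t => f t ^ 2) volume x y) :
    IntervalIntegrable f volume x y := by
  rw [intervalIntegrable_iff_integrableOn_Ioc_of_le hxy] at hf2 ⊢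
  exact ((memLp_two_iff_integrable_sq hf).2 hf2).integrable one_le_two

theorem aestronglyMeasurable_of_hasDerivAt {a b : ℝ} {f f' : ℝ → ℝ}
    (hf : ∀ t ∈ Ioo a b, HasDerivAt f (f' t) t) :
    AEStronglyMeasurable f' (volume.restrict (Ioc a b)) := by
  rw [Measure.restrict_congr_set Ioo_ae_eq_Ioc.symm]
  refine (measurable_deriv f).aestronglyMeasurable.congr ?_
  exact (ae_restrict_iff' measurableSet_Ioo).2 (.of_forall fun t ht => (hf t ht).deriv)

theorem exists_continuousOn_Icc_eqOn_Ioo_of_hasDerivAt {a b : ℝ} (hab : a < b) {f f' : ℝ → ℝ}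
    (hf : ∀ t ∈ Ioo a b, HasDerivAt f (f' t) t) (hf' : IntervalIntegrable f' volume a b) :
    ∃ g : ℝ → ℝ, ContinuousOn g (Icc a b) ∧ EqOn g f (Ioo a b) := by
  obtain ⟨m, hm⟩ : (Ioo a b).Nonempty := nonempty_Ioo.2 hab
  refine ⟨fun t => f m + ∫ s in m..t, f' s, ?_, fun t ht => ?_⟩
  · have hmab : m ∈ uIcc a b := by rw [uIcc_of_le hab.le]; exact Ioo_subset_Icc_self hm
    refine continuousOn_const.add ?_
    simpa only [uIcc_of_le hab.le] using intervalIntegral.continuousOn_primitive_interval' hf' hmab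
  · have hsub : uIcc m t ⊆ Ioo a b := ordConnected_Ioo.uIcc_subset hm ht
    dsimp only
    rw [intervalIntegral.integral_eq_sub_of_hasDerivAt (fun s hs => hf s (hsub hs))
      (hf'.mono_set ((hsub.trans Ioo_subset_Icc_self).trans (by rw [uIcc_of_le hab.le])))]
    ring

structure HasTwoDerivsOn (f f' f'' : ℝ → ℝ) (x y : ℝ) : Prop where
  continuousOn : ContinuousOn f (Icc x y)
  continuousOn_deriv : ContinuousOn f' (Icc x y)
  hasDerivAt : ∀ t ∈ Ioo x y, HasDerivAt f (f' t) t
  hasDerivAt_deriv : ∀ t ∈ Ioo x y, HasDerivAt f' (f'' t) t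

theorem HasTwoDerivsOn.mono {f f' f'' : ℝ → ℝ} {x y x' y' : ℝ} (h : HasTwoDerivsOn f f' f'' x y)
    (hx : x ≤ x') (hy : y' ≤ y) : HasTwoDerivsOn f f' f'' x' y' where
  continuousOn := h.continuousOn.mono (Icc_subset_Icc hx hy)
  continuousOn_deriv := h.continuousOn_deriv.mono (Icc_subset_Icc hx hy)
  hasDerivAt t ht := h.hasDerivAt t (Ioo_subset_Ioo hx hy ht)
  hasDerivAt_deriv t ht := h.hasDerivAt_deriv t (Ioo_subset_Ioo hx hy ht)

theorem intervalIntegral_sq_div_two_mul_eq {f f' f'' : ℝ → ℝ} {x y : ℝ} (hxy : x ≤ y) (c : ℝ)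
    (hf : HasTwoDerivsOn f f' f'' x y) (hf'' : IntervalIntegrable f'' volume x y) :
    ∫ t in x..y, (t - c) ^ 2 / 2 * f'' t
      = ((y - c) ^ 2 / 2 * f' y - (y - c) * f y) - ((x - c) ^ 2 / 2 * f' x - (x - c) * f x)
        + ∫ t in x..y, f t := by
  have hfi : IntervalIntegrable f volume x y := hf.continuousOn.intervalIntegrable_of_Icc hxy
  have hKf'' : IntervalIntegrable (fun t => (t - c) ^ 2 / 2 * f'' t) volume x y :=
    hf''.continuousOn_mul (by fun_prop)
  have ftc : ∫ t in x..y, ((t - c) ^ 2 / 2 * f'' t - f t)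
      = ((y - c) ^ 2 / 2 * f' y - (y - c) * f y) - ((x - c) ^ 2 / 2 * f' x - (x - c) * f x) := by
    refine intervalIntegral.integral_eq_sub_of_hasDeriv_right_of_le hxy
      ((by fun_prop : Continuous fun t => (t - c) ^ 2 / 2).continuousOn.mul hf.continuousOn_deriv
        |>.sub ((continuous_sub_right c).continuousOn.mul hf.continuousOn))
      (fun t ht => ?_) (hKf''.sub hfi)
    have hK : HasDerivAt (fun s => (s - c) ^ 2 / 2) (t - c) t :=
      ((((hasDerivAt_id' t).sub_const c).fun_pow 2).div_const 2).congr_deriv (by norm_num)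
    have hL : HasDerivAt (fun s => s - c) 1 t := (hasDerivAt_id t).sub_const c
    convert ((hK.mul (hf.hasDerivAt_deriv t ht)).sub (hL.mul (hf.hasDerivAt t ht))).hasDerivWithinAt
      using 1
    ring
  rw [intervalIntegral.integral_sub hKf'' hfi] at ftc
  linarith

theorem abs_sum_le_sqrt_sum_mul_sqrt_sum {ι : Type*} (s : Finset ι) {e A B : ι → ℝ}
    (hA : ∀ i, 0 ≤ A i) (hB : ∀ i, 0 ≤ B i) (he : ∀ i ∈ s, |e i| ≤ √(A i) * √(B i)) :
    |∑ i ∈ s, e i| ≤ √(∑ i ∈ s, A i) * √(∑ i ∈ s, B i) :=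
  (Finset.abs_sum_le_sum_abs e s).trans
    ((Finset.sum_le_sum he).trans (Real.sum_sqrt_mul_sqrt_le s hA hB))

theorem intervalIntegral_sq_div_two_sq (c x y : ℝ) :
    ∫ t in x..y, ((t - c) ^ 2 / 2) ^ 2 = ((y - c) ^ 5 - (x - c) ^ 5) / 20 := by
  have h : ∀ t : ℝ, ((t - c) ^ 2 / 2) ^ 2 = (t - c) ^ 4 / 4 := fun t => by ring
  simp only [h, intervalIntegral.integral_div, intervalIntegral.integral_comp_sub_right
    (fun s => s ^ 4), integral_pow]
  ring

theorem uIcc_subset_uIcc_of_le {α : Type*} [Lattice α] {u v x y : α}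
    (hx : u ≤ x) (hxy : x ≤ y) (hy : y ≤ v) : uIcc x y ⊆ uIcc u v := by
  rw [uIcc_of_le hxy, uIcc_of_le (hx.trans (hxy.trans hy))]
  exact Icc_subset_Icc hx hy

section Quadrature

variable {f f' f'' : ℝ → ℝ} {u v : ℝ}

theorem quadrature_error_eq_sum_kernel (huv : u ≤ v) (hf : HasTwoDerivsOn f f' f'' u v)
    (hf'' : IntervalIntegrable f'' volume u v) :
    (∫ t in u..v, f t) - (v - u) / 2 * (f ((3 * u + v) / 4) + f ((u + 3 * v) / 4))
      = (∫ t in u..(3 * u + v) / 4, (t - u) ^ 2 / 2 * f'' t)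
        + (∫ t in (3 * u + v) / 4..(u + 3 * v) / 4, (t - (u + v) / 2) ^ 2 / 2 * f'' t)
        + ∫ t in (u + 3 * v) / 4..v, (t - v) ^ 2 / 2 * f'' t := by
  have hup : u ≤ (3 * u + v) / 4 := by linarith
  have hpq : (3 * u + v) / 4 ≤ (u + 3 * v) / 4 := by linarith
  have hqv : (u + 3 * v) / 4 ≤ v := by linarith
  set p := (3 * u + v) / 4 with hp
  set q := (u + 3 * v) / 4 with hq
  have hf''_on {x y} (hx : u ≤ x) (hxy : x ≤ y) (hy : y ≤ v) : IntervalIntegrable f'' volume x y :=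
    hf''.mono_set (uIcc_subset_uIcc_of_le hx hxy hy)
  have hf_on {x y} (hx : u ≤ x) (hxy : x ≤ y) (hy : y ≤ v) : IntervalIntegrable f volume x y :=
    (hf.mono hx hy).continuousOn.intervalIntegrable_of_Icc hxy
  rw [intervalIntegral_sq_div_two_mul_eq hup u (hf.mono le_rfl (hpq.trans hqv))
      (hf''_on le_rfl hup (hpq.trans hqv)),
    intervalIntegral_sq_div_two_mul_eq hpq _ (hf.mono hup hqv) (hf''_on hup hpq hqv),
    intervalIntegral_sq_div_two_mul_eq hqv v (hf.mono (hup.trans hpq) le_rfl)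
      (hf''_on (hup.trans hpq) hqv le_rfl),
    ← intervalIntegral.integral_add_adjacent_intervals (hf_on le_rfl hup (hpq.trans hqv))
      (hf_on hup (hpq.trans hqv) le_rfl),
    ← intervalIntegral.integral_add_adjacent_intervals (hf_on hup hpq hqv)
      (hf_on (hup.trans hpq) hqv le_rfl), hp, hq]
  ring

theorem abs_quadrature_error_le (huv : u ≤ v) (hf : HasTwoDerivsOn f f' f'' u v)
    (hf'' : IntervalIntegrable f'' volume u v)
    (hf''_sq : IntervalIntegrable (fun t => f'' t ^ 2) volume u v) :
    |(∫ t in u..v, f t) - (v - u) / 2 * (f ((3 * u + v) / 4) + f ((u + 3 * v) / 4))|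
      ≤ √((v - u) ^ 5 / 5120) * √(∫ t in u..v, f'' t ^ 2) := by
  let z : Fin 4 → ℝ := ![u, (3 * u + v) / 4, (u + 3 * v) / 4, v]
  let c : Fin 3 → ℝ := ![u, (u + v) / 2, v]
  have hz (i : Fin 3) : u ≤ z i.castSucc ∧ z i.castSucc ≤ z i.succ ∧ z i.succ ≤ v := by
    fin_cases i <;> refine ⟨?_, ?_, ?_⟩ <;>
      simp only [Fin.zero_eta, Fin.mk_one, Fin.reduceFinMk, Fin.castSucc_zero, Fin.castSucc_one,
        Fin.reduceCastSucc, Fin.succ_zero_eq_one, Fin.succ_one_eq_two, Fin.reduceSucc,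
        Matrix.cons_val_zero, Matrix.cons_val_one, Matrix.cons_val, z] <;>
      linarith
  have hcs := abs_sum_le_sqrt_sum_mul_sqrt_sum Finset.univ
    (e := fun i => ∫ t in z i.castSucc..z i.succ, (t - c i) ^ 2 / 2 * f'' t)
    (A := fun i => ∫ t in z i.castSucc..z i.succ, ((t - c i) ^ 2 / 2) ^ 2)
    (B := fun i => ∫ t in z i.castSucc..z i.succ, f'' t ^ 2)
    (fun i => intervalIntegral.integral_nonneg (hz i).2.1 fun _ _ => by positivity)
    (fun i => intervalIntegral.integral_nonneg (hz i).2.1 fun _ _ => by positivity)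
    fun i _ => abs_intervalIntegral_mul_le_sqrt_mul_sqrt (hz i).2.1
      (Continuous.intervalIntegrable (by fun_prop) _ _)
      (Continuous.intervalIntegrable (by fun_prop) _ _)
      (hf''.mono_set (uIcc_subset_uIcc_of_le (hz i).1 (hz i).2.1 (hz i).2.2))
      (hf''_sq.mono_set (uIcc_subset_uIcc_of_le (hz i).1 (hz i).2.1 (hz i).2.2))
  simp only [Fin.sum_univ_three, Fin.castSucc_zero, Fin.castSucc_one, Fin.reduceCastSucc,
    Matrix.cons_val_zero, Matrix.cons_val_one, Matrix.cons_val_succ, Matrix.cons_val, z, c,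
    intervalIntegral_sq_div_two_sq] at hcs
  rw [quadrature_error_eq_sum_kernel huv hf hf'']
  convert hcs using 3
  · ring
  · rw [intervalIntegral.integral_add_adjacent_intervals,
      intervalIntegral.integral_add_adjacent_intervals]
    all_goals
      exact hf''_sq.mono_set (uIcc_subset_uIcc_of_le (by linarith) (by linarith) (by linarith))

theorem abs_composite_quadrature_error_le {x : ℕ → ℝ} {n : ℕ} (hx : Monotone x)
    (hf : HasTwoDerivsOn f f' f'' (x 0) (x n)) (hf'' : IntervalIntegrable f'' volume (x 0) (x n))
    (hf''_sq : IntervalIntegrable (fun t => f'' t ^ 2) volume (x 0) (x n)) :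
    |(∫ t in x 0..x n, f t) - ∑ i ∈ Finset.range n,
        (x (i + 1) - x i) / 2 * (f ((3 * x i + x (i + 1)) / 4) + f ((x i + 3 * x (i + 1)) / 4))|
      ≤ √(∑ i ∈ Finset.range n, (x (i + 1) - x i) ^ 5 / 5120) * √(∫ t in x 0..x n, f'' t ^ 2) := by
  have hsub : ∀ i < n, uIcc (x i) (x (i + 1)) ⊆ uIcc (x 0) (x n) := fun i hi =>
    uIcc_subset_uIcc_of_le (hx (Nat.zero_le i)) (hx i.le_succ) (hx hi)
  rw [← intervalIntegral.sum_integral_adjacent_intervals fun i hi =>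
      (hf.mono (hx (Nat.zero_le i)) (hx hi)).continuousOn.intervalIntegrable_of_Icc (hx i.le_succ),
    ← intervalIntegral.sum_integral_adjacent_intervals fun i hi => hf''_sq.mono_set (hsub i hi),
    ← Finset.sum_sub_distrib]
  refine abs_sum_le_sqrt_sum_mul_sqrt_sum _
    (fun i => by have := sub_nonneg.2 (hx i.le_succ); positivity)
    (fun i => intervalIntegral.integral_nonneg (hx i.le_succ) fun _ _ => sq_nonneg _)
    (fun i hi => ?_)
  rw [Finset.mem_range] at hi
  exact abs_quadrature_error_le (hx i.le_succ) (hf.mono (hx (Nat.zero_le i)) (hx hi))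
    (hf''.mono_set (hsub i hi)) (hf''_sq.mono_set (hsub i hi))

end Quadrature

theorem sqrt_mul_div_pow_five_le {L : ℝ} (hL : 0 ≤ L) {n : ℕ} (hn : 0 < n) :
    √(n * ((L / n) ^ 5 / 5120)) ≤ L ^ ((5 : ℝ) / 2) / (4 * √3 * π * n ^ 2) := by
  have hn' : (0 : ℝ) < n := Nat.cast_pos.2 hn
  have hD : 0 < 4 * √3 * π * n ^ 2 := by positivity
  have hD_sq : (4 * √3 * π * n ^ 2) ^ 2 = 48 * π ^ 2 * n ^ 4 := by
    rw [mul_pow, mul_pow, mul_pow, Real.sq_sqrt zero_le_three]; ring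
  have hL_pow : L ^ ((5 : ℝ) / 2) = √(L ^ 5) := by
    rw [Real.sqrt_eq_rpow, ← Real.rpow_natCast, ← Real.rpow_mul hL]; norm_num
  rw [hL_pow, ← Real.sqrt_sq hD.le, ← Real.sqrt_div (pow_nonneg hL 5), hD_sq]
  refine Real.sqrt_le_sqrt ?_
  have hlhs : n * ((L / n) ^ 5 / 5120) = L ^ 5 / (5120 * n ^ 4) := by field_simp
  rw [hlhs]
  refine div_le_div_of_nonneg_left (by positivity) (by positivity) ?_
  have hπ : π ^ 2 ≤ 16 := by nlinarith [Real.pi_lt_four, Real.pi_pos]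
  nlinarith [mul_le_mul_of_nonneg_right hπ (by positivity : (0 : ℝ) ≤ n ^ 4)]

theorem composite_quadrature_second_deriv_L2_general
    (a b : ℝ) (hab : a < b) (n : ℕ) (hn : 1 ≤ n)
    (x : ℕ → ℝ) (hx : ∀ i, x i = a + i * (b - a) / n)
    (f f' f'' : ℝ → ℝ)
    (hcont : ContinuousOn f (Set.Icc a b))
    (hderiv : ∀ t ∈ Set.Ioo a b, HasDerivAt f (f' t) t)
    (hderiv2 : ∀ t ∈ Set.Ioo a b, HasDerivAt f' (f'' t) t)
    (hL2 : IntervalIntegrable (fun t => (f'' t) ^ 2) MeasureTheory.volume a b) :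
    |(∫ t in a..b, f t) -
        ((b - a) / n / 2) * ∑ i ∈ Finset.range n,
          (f ((3 * x i + x (i + 1)) / 4) + f ((x i + 3 * x (i + 1)) / 4))|
      ≤ (b - a) ^ ((5 : ℝ) / 2) / (4 * Real.sqrt 3 * Real.pi * n ^ 2) *
          Real.sqrt (∫ t in a..b, (f'' t) ^ 2) := by
  have hn' : (0 : ℝ) < n := Nat.cast_pos.2 hn
  have hstep : ∀ i, x (i + 1) - x i = (b - a) / n := fun i => by rw [hx, hx]; push_cast; ring
  have hx0 : x 0 = a := by simp [hx]
  have hxn : x n = b := by rw [hx]; field_simp; ring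
  have hmono : Monotone x := fun i j hij => by simp only [hx]; gcongr
  have hf'' : IntervalIntegrable f'' volume a b :=
    .of_sq hab.le (aestronglyMeasurable_of_hasDerivAt hderiv2) hL2
  obtain ⟨g, hg, hgf'⟩ := exists_continuousOn_Icc_eqOn_Ioo_of_hasDerivAt hab hderiv2 hf''
  have hf : HasTwoDerivsOn f g f'' a b :=
    { continuousOn := hcont
      continuousOn_deriv := hg
      hasDerivAt := fun t ht => hgf' ht ▸ hderiv t ht
      hasDerivAt_deriv := fun t ht => (hderiv2 t ht).congr_of_eventuallyEq
        (Filter.eventuallyEq_of_mem (Ioo_mem_nhds ht.1 ht.2) hgf') }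
  have hbound := abs_composite_quadrature_error_le hmono (hx0 ▸ hxn ▸ hf) (hx0 ▸ hxn ▸ hf'')
    (hx0 ▸ hxn ▸ hL2)
  simp only [hx0, hxn, hstep, Finset.sum_const, Finset.card_range, nsmul_eq_mul,
    ← Finset.mul_sum] at hbound
  exact hbound.trans <| mul_le_mul_of_nonneg_right
    (sqrt_mul_div_pow_five_le (sub_nonneg.2 hab.le) hn) (Real.sqrt_nonneg _)

/-- **Composite quadrature rule for `f'' ∈ L²[a,b]`, uniform partition** (Theorem 3.2,
inequality (3.4)). With nodes `x i = a + i (b-a)/n` and mesh `h = (b-a)/n`, for `f`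
continuous on `[a,b]`, twice continuously differentiable on `(a,b)` with `f''`
square-integrable on `[a,b]`, the composite rule
`S(f, Iₙ) = (h/2) ∑ᵢ [f((3xᵢ+x_{i+1})/4) + f((xᵢ+3x_{i+1})/4)]` satisfies
`|∫_a^b f - S(f, Iₙ)| ≤ ((b-a)^{5/2}/(4√3 π n²)) ‖f''‖₂`. -/
theorem composite_quadrature_second_deriv_L2
    (a b : ℝ) (hab : a < b) (n : ℕ) (hn : 1 ≤ n)
    (x : ℕ → ℝ) (hx : ∀ i, x i = a + i * (b - a) / n)
    (f f' f'' : ℝ → ℝ)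
    (hcont : ContinuousOn f (Set.Icc a b))
    (hderiv : ∀ t ∈ Set.Ioo a b, HasDerivAt f (f' t) t)
    (hderiv2 : ∀ t ∈ Set.Ioo a b, HasDerivAt f' (f'' t) t)
    (hcont2 : ContinuousOn f'' (Set.Ioo a b))
    (hL2 : IntervalIntegrable (fun t => (f'' t) ^ 2) MeasureTheory.volume a b) :
    |(∫ t in a..b, f t) -
        ((b - a) / n / 2) * ∑ i ∈ Finset.range n,
          (f ((3 * x i + x (i + 1)) / 4) + f ((x i + 3 * x (i + 1)) / 4))|
      ≤ (b - a) ^ ((5 : ℝ) / 2) / (4 * Real.sqrt 3 * Real.pi * n ^ 2) *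
          Real.sqrt (∫ t in a..b, (f'' t) ^ 2) :=
  composite_quadrature_second_deriv_L2_general a b hab n hn x hx f f' f'' hcont hderiv hderiv2 hL2
end

section
/- Let a < b be real numbers and let f : [a,b] → [0,1] be a probability density function on [a,b] (so f is integrable with ∫_a^b f(t) dt = 1) with cumulative distribution function F(x) = ∫_a^x f(t) dt, and suppose γ ≤ f(t) ≤ Γ for all t ∈ [a,b] (so that F is differentiable with derivative f). Let E(X) = ∫_a^b t f(t) dt be the expectation, which satisfies E(X) = b − ∫_a^b F(t) dt. Then for all x ∈ [a, (a+b)/2], |(F(x) + F(a+b−x))/2 − (b − E(X))/(b − a)| ≤ [(b−a)/4 + |x − (3a+b)/4|] · (1/(b−a) − γ) and |(F(x) + F(a+b−x))/2 − (b − E(X))/(b − a)| ≤ [(b−a)/4 + |x − (3a+b)/4|] · (Γ − 1/(b−a)). -/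
/-!
With `K x t` equal to `t - a`, `t - (a + b) / 2`, `t - b` on `[a, x]`, `[x, a + b - x]`,
`[a + b - x, b]`, splitting `∫ t f` at `x` and `a + b - x` gives
`∫_a^b K x t (f t - μ) dt = (b - a) (F x + F (a + b - x)) / 2 - (b - E)` for every constant `μ`,
since `K x` has mean zero. As `|K x t| ≤ (b - a) / 4 + |x - (3a + b) / 4|`, the left side is at
most that constant times `∫ |f - μ|`, and for `μ = γ` or `μ = Γ` the function `f - μ` has
constant sign, so `∫ |f - μ|` is `1 - γ (b - a)` or `Γ (b - a) - 1`.
-/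

open MeasureTheory intervalIntegral Set

noncomputable def companionKernelIntegral (a b c : ℝ) (h : ℝ → ℝ) : ℝ :=
  (∫ t in a..c, (t - a) * h t) + (∫ t in c..(a + b - c), (t - (a + b) / 2) * h t)
    + ∫ t in (a + b - c)..b, (t - b) * h t

lemma IntervalIntegrable.mono_of_mem_Icc {h : ℝ → ℝ} {a b u v : ℝ}
    (hh : IntervalIntegrable h volume a b) (hu : u ∈ Icc a b) (hv : v ∈ Icc a b) :
    IntervalIntegrable h volume u v :=
  hh.mono_set (uIcc_subset_uIcc (Icc_subset_uIcc hu) (Icc_subset_uIcc hv))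

lemma IntervalIntegrable.id_mul {h : ℝ → ℝ} {u v : ℝ}
    (hh : IntervalIntegrable h volume u v) :
    IntervalIntegrable (fun t => t * h t) volume u v :=
  hh.continuousOn_mul continuousOn_id

lemma add_sub_mem_Icc {a b c : ℝ} (hc : c ∈ Icc a b) : a + b - c ∈ Icc a b :=
  ⟨by linarith [hc.2], by linarith [hc.1]⟩

lemma integral_sub_const_mul {h : ℝ → ℝ} {u v : ℝ} (hh : IntervalIntegrable h volume u v)
    (p : ℝ) :
    ∫ t in u..v, (t - p) * h t = (∫ t in u..v, t * h t) - p * ∫ t in u..v, h t := by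
  simp only [sub_mul]
  rw [integral_sub hh.id_mul (hh.const_mul p), intervalIntegral.integral_const_mul]

lemma abs_integral_mul_le_of_abs_le {g h : ℝ → ℝ} {u v M : ℝ} (huv : u ≤ v)
    (hg : ∀ t ∈ Icc u v, |g t| ≤ M) (hh : IntervalIntegrable h volume u v) :
    |∫ t in u..v, g t * h t| ≤ M * ∫ t in u..v, |h t| := by
  rw [← intervalIntegral.integral_const_mul, ← Real.norm_eq_abs]
  refine norm_integral_le_of_norm_le huv (ae_of_all _ fun t ht => ?_) (hh.abs.const_mul M)
  rw [Real.norm_eq_abs, abs_mul]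
  exact mul_le_mul_of_nonneg_right (hg t (Ioc_subset_Icc_self ht)) (abs_nonneg _)

section companionKernel

variable {a b c : ℝ} {h : ℝ → ℝ}

lemma companionKernelIntegral_eq (hc : c ∈ Icc a b) (hh : IntervalIntegrable h volume a b) :
    companionKernelIntegral a b c h
      = (b - a) / 2 * ((∫ t in a..c, h t) + ∫ t in a..(a + b - c), h t)
        - b * (∫ t in a..b, h t) + ∫ t in a..b, t * h t := by
  have hab : a ≤ b := hc.1.trans hc.2
  have h₁ := hh.mono_of_mem_Icc (left_mem_Icc.2 hab) hc
  have h₂ := hh.mono_of_mem_Icc hc (add_sub_mem_Icc hc)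
  have h₃ := hh.mono_of_mem_Icc (add_sub_mem_Icc hc) (right_mem_Icc.2 hab)
  rw [companionKernelIntegral, integral_sub_const_mul h₁, integral_sub_const_mul h₂,
    integral_sub_const_mul h₃, ← integral_add_adjacent_intervals h₁ h₂,
    ← integral_add_adjacent_intervals (h₁.trans h₂) h₃,
    ← integral_add_adjacent_intervals h₁ h₂,
    ← integral_add_adjacent_intervals (h₁.id_mul.trans h₂.id_mul) h₃.id_mul,
    ← integral_add_adjacent_intervals h₁.id_mul h₂.id_mul]
  ring

/-- The kernel has mean zero. -/
lemma companionKernelIntegral_sub_const (hc : c ∈ Icc a b)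
    (hh : IntervalIntegrable h volume a b) (μ : ℝ) :
    companionKernelIntegral a b c (fun t => h t - μ) = companionKernelIntegral a b c h := by
  have hab : a ≤ b := hc.1.trans hc.2
  have hsub : ∀ y ∈ Icc a b, ∫ t in a..y, (h t - μ) = (∫ t in a..y, h t) - (y - a) * μ :=
    fun y hy => by
      rw [integral_sub (hh.mono_of_mem_Icc (left_mem_Icc.2 hab) hy) intervalIntegrable_const,
        intervalIntegral.integral_const, smul_eq_mul]
  rw [companionKernelIntegral_eq hc (hh.sub intervalIntegrable_const),
    companionKernelIntegral_eq hc hh, hsub c hc, hsub _ (add_sub_mem_Icc hc),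
    hsub b (right_mem_Icc.2 hab)]
  simp only [mul_sub]
  rw [integral_sub hh.id_mul (intervalIntegrable_id.mul_const μ),
    intervalIntegral.integral_mul_const, integral_id]
  ring

/-- `(b - a) / 4 + |c - (3a + b) / 4|` is `max (c - a) ((a + b) / 2 - c)`, the sup of the
kernel's modulus on `[a, b]`. -/
lemma abs_companionKernelIntegral_le (hc : c ∈ Icc a ((a + b) / 2))
    (hh : IntervalIntegrable h volume a b) :
    |companionKernelIntegral a b c h|
      ≤ ((b - a) / 4 + |c - (3 * a + b) / 4|) * ∫ t in a..b, |h t| := by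
  obtain ⟨hac, hcm⟩ := hc
  set M := (b - a) / 4 + |c - (3 * a + b) / 4| with hM
  have hM₁ : c - a ≤ M := by rw [hM]; linarith [le_abs_self (c - (3 * a + b) / 4)]
  have hM₂ : (a + b) / 2 - c ≤ M := by rw [hM]; linarith [neg_abs_le (c - (3 * a + b) / 4)]
  have hab : a ≤ b := by linarith
  have hc : c ∈ Icc a b := ⟨hac, by linarith⟩
  have h₁ := hh.mono_of_mem_Icc (left_mem_Icc.2 hab) hc
  have h₂ := hh.mono_of_mem_Icc hc (add_sub_mem_Icc hc)
  have h₃ := hh.mono_of_mem_Icc (add_sub_mem_Icc hc) (right_mem_Icc.2 hab)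
  have b₁ := abs_integral_mul_le_of_abs_le hac (M := M) (g := fun t => t - a)
    (fun t ht => by rw [abs_le]; constructor <;> linarith [ht.1, ht.2]) h₁
  have b₂ := abs_integral_mul_le_of_abs_le (by linarith) (M := M) (g := fun t => t - (a + b) / 2)
    (fun t ht => by rw [abs_le]; constructor <;> linarith [ht.1, ht.2]) h₂
  have b₃ := abs_integral_mul_le_of_abs_le (by linarith) (M := M) (g := fun t => t - b)
    (fun t ht => by rw [abs_le]; constructor <;> linarith [ht.1, ht.2]) h₃
  rw [← integral_add_adjacent_intervals (h₁.abs.trans h₂.abs) h₃.abs,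
    ← integral_add_adjacent_intervals h₁.abs h₂.abs]
  calc |companionKernelIntegral a b c h| ≤ _ := abs_add_three _ _ _
    _ ≤ _ := by linarith

end companionKernel

theorem companion_ostrowski_pdf_general
    (a b γ Γ : ℝ) (hab : a < b) (f : ℝ → ℝ)
    (hint : IntervalIntegrable f MeasureTheory.volume a b)
    (hone : (∫ t in a..b, f t) = 1)
    (hbound : ∀ t ∈ Set.Icc a b, γ ≤ f t ∧ f t ≤ Γ)
    (F : ℝ → ℝ) (hF : ∀ y, F y = ∫ t in a..y, f t)
    (E : ℝ) (hE : E = ∫ t in a..b, t * f t) :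
    ∀ x ∈ Set.Icc a ((a + b) / 2),
      |(F x + F (a + b - x)) / 2 - (b - E) / (b - a)|
          ≤ ((b - a) / 4 + |x - (3 * a + b) / 4|) * (1 / (b - a) - γ) ∧
      |(F x + F (a + b - x)) / 2 - (b - E) / (b - a)|
          ≤ ((b - a) / 4 + |x - (3 * a + b) / 4|) * (Γ - 1 / (b - a)) := by
  intro x hx
  have hba : 0 < b - a := sub_pos.2 hab
  have hxab : x ∈ Icc a b := ⟨hx.1, by linarith [hx.2]⟩
  set M := (b - a) / 4 + |x - (3 * a + b) / 4|
  have hle : ∀ μ, |(F x + F (a + b - x)) / 2 - (b - E) / (b - a)|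
      ≤ M * (∫ t in a..b, |f t - μ|) / (b - a) := fun μ => by
    have key : (F x + F (a + b - x)) / 2 - (b - E) / (b - a)
        = companionKernelIntegral a b x (fun t => f t - μ) / (b - a) := by
      rw [companionKernelIntegral_sub_const hxab hint, companionKernelIntegral_eq hxab hint,
        hF, hF, hE, hone]
      field_simp
      ring
    rw [key, abs_div, abs_of_pos hba]
    exact div_le_div_of_nonneg_right
      (abs_companionKernelIntegral_le hx (hint.sub intervalIntegrable_const)) hba.le
  have hγ : ∫ t in a..b, |f t - γ| = 1 - γ * (b - a) := by
    rw [integral_congr fun t ht => abs_of_nonneg (sub_nonneg.2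
        (hbound t (uIcc_of_le hab.le ▸ ht)).1), integral_sub hint intervalIntegrable_const,
      hone, intervalIntegral.integral_const, smul_eq_mul, mul_comm]
  have hΓ : ∫ t in a..b, |f t - Γ| = Γ * (b - a) - 1 := by
    rw [integral_congr fun t ht => abs_sub_comm (f t) Γ ▸ abs_of_nonneg (sub_nonneg.2
        (hbound t (uIcc_of_le hab.le ▸ ht)).2), integral_sub intervalIntegrable_const hint,
      hone, intervalIntegral.integral_const, smul_eq_mul, mul_comm]
  refine ⟨(hle γ).trans_eq ?_, (hle Γ).trans_eq ?_⟩
  · rw [hγ]; field_simp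
  · rw [hΓ]; field_simp

/-- **Application to probability density functions** (Theorem 4.1, inequalities (4.1), (4.2)).
Let `f : [a,b] → [0,1]` be a probability density (`∫_a^b f = 1`), `F x = ∫_a^x f` the
cumulative distribution function, differentiable on `(a,b)` with derivative `f`, and suppose
`γ ≤ f ≤ Γ` on `[a,b]`. With `E = ∫_a^b t f(t) dt` the expectation, for all
`x ∈ [a, (a+b)/2]`,
`|(F x + F (a+b-x))/2 - (b - E)/(b - a)| ≤ ((b-a)/4 + |x - (3a+b)/4|) (1/(b-a) - γ)`
and the analogous inequality with `Γ - 1/(b-a)`. -/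
theorem companion_ostrowski_pdf
    (a b γ Γ : ℝ) (hab : a < b) (f : ℝ → ℝ)
    (hrange : ∀ t ∈ Set.Icc a b, f t ∈ Set.Icc (0 : ℝ) 1)
    (hint : IntervalIntegrable f MeasureTheory.volume a b)
    (hone : (∫ t in a..b, f t) = 1)
    (hbound : ∀ t ∈ Set.Icc a b, γ ≤ f t ∧ f t ≤ Γ)
    (F : ℝ → ℝ) (hF : ∀ y, F y = ∫ t in a..y, f t)
    (hFderiv : ∀ t ∈ Set.Ioo a b, HasDerivAt F (f t) t)
    (E : ℝ) (hE : E = ∫ t in a..b, t * f t) :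
    ∀ x ∈ Set.Icc a ((a + b) / 2),
      |(F x + F (a + b - x)) / 2 - (b - E) / (b - a)|
          ≤ ((b - a) / 4 + |x - (3 * a + b) / 4|) * (1 / (b - a) - γ) ∧
      |(F x + F (a + b - x)) / 2 - (b - E) / (b - a)|
          ≤ ((b - a) / 4 + |x - (3 * a + b) / 4|) * (Γ - 1 / (b - a)) :=
  companion_ostrowski_pdf_general a b γ Γ hab f hint hone hbound F hF E hE
end
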